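/- Let T be a spanning tree of G, let f ∈ E(G) \ E(T), and let e ∈ cyc(T,f) with e ≠ f, so that the graph T' with edge set (E(T) ∪ {f}) \ {e} is again a spanning tree of G. If α ∈ E(T) with α ≠ e and α ∉ cyc(T,f), then cut(T,α) = cut(T',α). -/

import Mathlib

open SimpleGraph

variable {V : Type*}

/-- `T` is a spanning tree of `G`: a subgraph of `G` (on the same vertex set) that is a tree. -/
def IsSpanningTree (G T : SimpleGraph V) : Prop :=
  T ≤ G ∧ T.IsTree

/-- `cutset G T e`: the set of edges of `G` whose endpoints lie in the two different
components of `T` with the edge `e` deleted. -/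
def cutset (G T : SimpleGraph V) (e : Sym2 V) : Set (Sym2 V) :=
  {f | f ∈ G.edgeSet ∧ ∀ u v : V, f = s(u, v) → ¬ (T.deleteEdges {e}).Reachable u v}

/-- `cycset T f`: the edge set of the unique cycle of `T` with the edge `f` added
(an edge of the unicyclic connected graph `T + f` lies on the cycle iff deleting it
keeps the graph connected). -/
def cycset (T : SimpleGraph V) (f : Sym2 V) : Set (Sym2 V) :=
  {e | e ∈ (T ⊔ fromEdgeSet {f}).edgeSet ∧
    ((T ⊔ fromEdgeSet {f}).deleteEdges {e}).Connected}

/-- An edge `e` of `T` is internally active if it is the minimum of `cutset G T e`. -/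
def InternallyActive [lo : LinearOrder (Sym2 V)] (G T : SimpleGraph V) (e : Sym2 V) : Prop :=
  e ∈ T.edgeSet ∧ ∀ f ∈ cutset G T e, lo.le e f

/-- `IN G T`: the set of internally inactive edges of `T`. -/
def IN [LinearOrder (Sym2 V)] (G T : SimpleGraph V) : Set (Sym2 V) :=
  {e | e ∈ T.edgeSet ∧ ¬ InternallyActive G T e}

/-- `C` is the edge set of some cycle of `G`. -/
def IsCycleEdgeSet (G : SimpleGraph V) (C : Set (Sym2 V)) : Prop :=
  ∃ (v : V) (w : G.Walk v v), w.IsCycle ∧ C = {e | e ∈ w.edges}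

/-- A broken circuit: the edge set of a cycle with its minimum edge removed. -/
def IsBrokenCircuit [lo : LinearOrder (Sym2 V)] (G : SimpleGraph V) (B : Set (Sym2 V)) : Prop :=
  ∃ (C : Set (Sym2 V)) (e : Sym2 V),
    IsCycleEdgeSet G C ∧ e ∈ C ∧ (∀ f ∈ C, lo.le e f) ∧ B = C \ {e}

/-- A set of edges is NBC if it contains no broken circuit. -/
def IsNBC [LinearOrder (Sym2 V)] (G : SimpleGraph V) (S : Set (Sym2 V)) : Prop :=
  ∀ B : Set (Sym2 V), IsBrokenCircuit G B → ¬ B ⊆ S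

/-- `T` is an NBC spanning tree of `G`. -/
def IsNBCSpanningTree [LinearOrder (Sym2 V)] (G T : SimpleGraph V) : Prop :=
  IsSpanningTree G T ∧ IsNBC G T.edgeSet

/-- The edge set of `T` written as a list in increasing order. -/
noncomputable def edgeList [Fintype V] [lo : LinearOrder (Sym2 V)] (T : SimpleGraph V) :
    List (Sym2 V) :=
  (Set.toFinite T.edgeSet).toFinset.sort lo.le

/-- Lexicographic order on spanning trees via their sorted edge lists. -/
def treeLexLT [Fintype V] [lo : LinearOrder (Sym2 V)] (T T' : SimpleGraph V) : Prop :=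
  List.Lex lo.lt (edgeList T) (edgeList T')

private lemma reach_endpoint_aux {V : Type*} {T : SimpleGraph V} (a b : V) {w c : V}
    (p : T.Walk w c) :
    (T.deleteEdges {s(a, b)}).Reachable w c ∨
      (T.deleteEdges {s(a, b)}).Reachable w a ∨ (T.deleteEdges {s(a, b)}).Reachable w b := by
  induction p with
  | nil => exact Or.inl (Reachable.refl _)
  | @cons u x _ h p ih =>
    by_cases hwx : s(u, x) = s(a, b)
    · rcases Sym2.eq_iff.mp hwx with ⟨h1, h2⟩ | ⟨h1, h2⟩
      · subst h1; exact Or.inr (Or.inl (Reachable.refl _))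
      · subst h1; exact Or.inr (Or.inr (Reachable.refl _))
    · have hadj : (T.deleteEdges {s(a, b)}).Adj u x := by
        rw [deleteEdges_adj]; exact ⟨h, by simpa using hwx⟩
      rcases ih with h' | h' | h'
      · exact Or.inl (hadj.reachable.trans h')
      · exact Or.inr (Or.inl (hadj.reachable.trans h'))
      · exact Or.inr (Or.inr (hadj.reachable.trans h'))

private lemma reach_endpoint {V : Type*} {T : SimpleGraph V} (hT : T.Connected)
    (a b w : V) :
    (T.deleteEdges {s(a, b)}).Reachable w a ∨ (T.deleteEdges {s(a, b)}).Reachable w b := by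
  obtain ⟨p⟩ := hT w a
  rcases reach_endpoint_aux a b p with h | h | h
  · exact Or.inl h
  · exact Or.inl h
  · exact Or.inr h

private lemma key_reach {V : Type*} {T : SimpleGraph V} (hT : T.IsTree) {f α : Sym2 V}
    (hα : α ∈ T.edgeSet) (hfα : f ≠ α)
    (hnc : ¬ ((T ⊔ fromEdgeSet {f}).deleteEdges {α}).Connected) (u v : V) :
    ((T ⊔ fromEdgeSet {f}).deleteEdges {α}).Reachable u v ↔
      (T.deleteEdges {α}).Reachable u v := by
  obtain ⟨a, b, hab⟩ : ∃ a b, α = s(a, b) := by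
    induction α using Sym2.ind with
    | _ x y => exact ⟨x, y, rfl⟩
  subst hab
  have hmono : T.deleteEdges {s(a, b)} ≤ (T ⊔ fromEdgeSet {f}).deleteEdges {s(a, b)} :=
    sdiff_le_sdiff le_sup_left le_rfl
  constructor
  · intro h
    have hro := reach_endpoint hT.isConnected a b
    have hf2 : ∀ x y : V, x ≠ y → s(x, y) = f →
        (T.deleteEdges {s(a, b)}).Reachable x y := by
      intro x y hxy hxyf
      have hadjf : ((T ⊔ fromEdgeSet {f}).deleteEdges {s(a, b)}).Adj x y := by
        rw [deleteEdges_adj, sup_adj, fromEdgeSet_adj]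
        exact ⟨Or.inr ⟨by simp [hxyf], hxy⟩, by simpa [hxyf] using hfα⟩
      have build : ∀ p q : V, ((T ⊔ fromEdgeSet {f}).deleteEdges {s(a, b)}).Adj p q →
          (T.deleteEdges {s(a, b)}).Reachable p a →
          (T.deleteEdges {s(a, b)}).Reachable q b → False := by
        intro p q hadjf hx hy
        apply hnc
        haveI : Nonempty V := ⟨a⟩
        have key : ∀ w, ((T ⊔ fromEdgeSet {f}).deleteEdges {s(a, b)}).Reachable w a := by
          intro w
          rcases hro w with h' | h'
          · exact h'.mono hmono
          · exact (h'.mono hmono).trans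
              (((hy.mono hmono).symm.trans (hadjf.symm.reachable)).trans (hx.mono hmono))
        exact Connected.mk fun p' q' => (key p').trans (key q').symm
      rcases hro x with hx | hx <;> rcases hro y with hy | hy
      · exact hx.trans hy.symm
      · exact absurd (build x y hadjf hx hy) (by simp)
      · exact absurd (build y x hadjf.symm hy hx) (by simp)
      · exact hx.trans hy.symm
    obtain ⟨p⟩ := h
    induction p with
    | nil => exact Reachable.refl _
    | @cons x y _ hadj p ih =>
      rw [deleteEdges_adj, sup_adj, fromEdgeSet_adj] at hadj
      obtain ⟨hxy | ⟨hxf, hne⟩, hnab⟩ := hadj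
      · exact (Adj.reachable (by rw [deleteEdges_adj]; exact ⟨hxy, hnab⟩)).trans ih
      · exact (hf2 x y hne (by simpa using hxf)).trans ih
  · exact fun h => h.mono hmono
/-- if `T' = (T ∪ {f}) \ {e}` is the spanning tree obtained from `T` by
exchanging an edge `e ∈ cyc(T,f)` for `f ∉ E(T)`, and `α ∈ E(T)` with `α ≠ e` and
`α ∉ cyc(T,f)`, then `cut(T,α) = cut(T',α)`. -/
theorem cutset_eq_of_not_mem_cycset
    {V : Type*} (G T : SimpleGraph V) (hT : IsSpanningTree G T)
    (f : Sym2 V) (hfG : f ∈ G.edgeSet) (hfT : f ∉ T.edgeSet)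
    (e : Sym2 V) (he : e ∈ cycset T f) (hef : e ≠ f)
    (hT' : IsSpanningTree G ((T ⊔ fromEdgeSet {f}).deleteEdges {e}))
    (α : Sym2 V) (hα : α ∈ T.edgeSet) (hαe : α ≠ e) (hαc : α ∉ cycset T f) :
    cutset G T α = cutset G ((T ⊔ fromEdgeSet {f}).deleteEdges {e}) α := by
  set T' := (T ⊔ fromEdgeSet {f}).deleteEdges {e} with hT'def
  have heS : e ∈ (T ⊔ fromEdgeSet {f}).edgeSet ∧
      ((T ⊔ fromEdgeSet {f}).deleteEdges {e}).Connected := he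
  have hαcS : ¬ (α ∈ (T ⊔ fromEdgeSet {f}).edgeSet ∧
      ((T ⊔ fromEdgeSet {f}).deleteEdges {α}).Connected) := hαc
  have hαbig : α ∈ (T ⊔ fromEdgeSet {f}).edgeSet := by
    rw [edgeSet_sup]; exact Or.inl hα
  have hnc : ¬ ((T ⊔ fromEdgeSet {f}).deleteEdges {α}).Connected := fun hc => hαcS ⟨hαbig, hc⟩
  have hEq : T' ⊔ fromEdgeSet {e} = T ⊔ fromEdgeSet {f} := by
    have hle : fromEdgeSet {e} ≤ T ⊔ fromEdgeSet {f} :=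
      (fromEdgeSet_mono (Set.singleton_subset_iff.2 heS.1)).trans_eq
        (fromEdgeSet_edgeSet _)
    rw [hT'def]
    show ((T ⊔ fromEdgeSet {f}) \ fromEdgeSet {e}) ⊔ fromEdgeSet {e} = _
    exact sdiff_sup_cancel hle
  have hαT' : α ∈ T'.edgeSet := by
    rw [hT'def, edgeSet_deleteEdges]
    exact ⟨hαbig, by simpa using hαe⟩
  have hfα : f ≠ α := fun h => hfT (h ▸ hα)
  have hnc2 : ¬ ((T' ⊔ fromEdgeSet {e}).deleteEdges {α}).Connected := by rw [hEq]; exact hnc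
  have main : ∀ u v, (T.deleteEdges {α}).Reachable u v ↔ (T'.deleteEdges {α}).Reachable u v := by
    intro u v
    have i1 := key_reach hT.2 hα hfα hnc u v
    have i2 := key_reach hT'.2 hαT' (Ne.symm hαe) hnc2 u v
    rw [hEq] at i2
    exact i1.symm.trans i2
  ext g
  simp only [cutset, Set.mem_setOf_eq]
  exact and_congr_right fun _ => forall_congr' fun u => forall_congr' fun v =>
    imp_congr_right fun _ => not_congr (main u v)
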